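/- Fix an integer N ≥ 1 and real numbers μ_i[0] > 0 for 0 ≤ i ≤ N−1, and let the sequences μ_i : ℕ → (0,∞) be determined by the recursion μ_i[n+1] = μ_i[n]·exp( 2·Σ_{j=0}^{i−1} μ_j[n+1] ). Let a > 0 and n₀ ∈ ℕ, and suppose μ_j[n₀] = (a/N)·e^{−2ja/N} for every 0 ≤ j ≤ N−1. Then μ_j[n₀+1] = a/N for every 0 ≤ j ≤ N−1; consequently Σ_{j=0}^{N−1} μ_j[n₀+1] = a, and any sequence E : ℕ → (0,∞) satisfying E[n+1] = E[n]·exp( Σ_{j=0}^{N−1} μ_j[n+1] ) satisfies E[n₀+1] = e^{a}·E[n₀]. -/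

import Mathlib

/-!
If the first `j` beams already sit at the common level `c` at time `n + 1`, the `j`-th beam
is multiplied by `exp (2 j c)`, which exactly cancels the factor `exp (-2 j c)` of the
profile; strong induction on `j` makes every beam equal to `c`.
-/

/-- The recursive system modelling the energy exchange between `N` spherically symmetric
Vlasov beams: `μ_i[n+1] = μ_i[n]·exp(2·Σ_{j=0}^{i−1} μ_j[n+1])` for `0 ≤ i ≤ N−1`
(the empty sum being `0` for `i = 0`). -/
def MuRec (N : ℕ) (μ : ℕ → ℕ → ℝ) : Prop :=
  ∀ i < N, ∀ n : ℕ,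
    μ i (n + 1) = μ i n * Real.exp (2 * ∑ j ∈ Finset.range i, μ j (n + 1))

open Finset Real

theorem MuRec.eq_const_succ_of_eq_mul_exp {N : ℕ} {μ : ℕ → ℕ → ℝ} (hrec : MuRec N μ)
    {n : ℕ} {c : ℝ} (hprof : ∀ j < N, μ j n = c * exp (-(2 * j * c))) :
    ∀ j < N, μ j (n + 1) = c := by
  intro j
  induction j using Nat.strong_induction_on with
  | _ j ih =>
    intro hj
    have hsum : ∑ k ∈ range j, μ k (n + 1) = j * c := by
      rw [sum_congr rfl fun k hk => ih k (mem_range.mp hk) ((mem_range.mp hk).trans hj)]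
      simp
    rw [hrec j hj n, hsum, hprof j hj, mul_assoc, ← exp_add]
    rw [show -(2 * j * c) + 2 * (j * c) = 0 by ring, exp_zero, mul_one]

theorem mu_system_profile_step_general (N : ℕ) (hN : 1 ≤ N) (μ : ℕ → ℕ → ℝ)
    (hrec : MuRec N μ)
    (a : ℝ) (n₀ : ℕ)
    (hprof : ∀ j < N, μ j n₀ = a / N * Real.exp (-(2 * (j : ℝ) * a / N))) :
    (∀ j < N, μ j (n₀ + 1) = a / N) ∧
      (∑ j ∈ Finset.range N, μ j (n₀ + 1) = a) ∧
      ∀ E : ℕ → ℝ, (∀ n : ℕ, 0 < E n) →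
        (∀ n : ℕ, E (n + 1) = E n * Real.exp (∑ j ∈ Finset.range N, μ j (n + 1))) →
        E (n₀ + 1) = Real.exp a * E n₀ := by
  have hflat : ∀ j < N, μ j (n₀ + 1) = a / N :=
    hrec.eq_const_succ_of_eq_mul_exp fun j hj => by rw [hprof j hj, mul_div_assoc]
  have hsum : ∑ j ∈ range N, μ j (n₀ + 1) = a := by
    rw [sum_congr rfl fun j hj => hflat j (mem_range.mp hj), sum_const, card_range,
      nsmul_eq_mul, mul_div_cancel₀ a (by positivity)]
  exact ⟨hflat, hsum, fun E _ hE => by rw [hE n₀, hsum, mul_comm]⟩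

/-- **One step of the recursion starting from the intermediate profile.** If
`μ_j[n₀] = (a/N)·e^{−2ja/N}` for all `j < N`, then `μ_j[n₀+1] = a/N`, so the profile sums
to `a` and any energy sequence `E[n+1] = E[n]·exp(Σ_j μ_j[n+1])` is amplified by `e^a`. -/
theorem mu_system_profile_step (N : ℕ) (hN : 1 ≤ N) (μ : ℕ → ℕ → ℝ)
    (hpos : ∀ i < N, ∀ n : ℕ, 0 < μ i n) (hrec : MuRec N μ)
    (a : ℝ) (ha : 0 < a) (n₀ : ℕ)
    (hprof : ∀ j < N, μ j n₀ = a / N * Real.exp (-(2 * (j : ℝ) * a / N))) :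
    (∀ j < N, μ j (n₀ + 1) = a / N) ∧
      (∑ j ∈ Finset.range N, μ j (n₀ + 1) = a) ∧
      ∀ E : ℕ → ℝ, (∀ n : ℕ, 0 < E n) →
        (∀ n : ℕ, E (n + 1) = E n * Real.exp (∑ j ∈ Finset.range N, μ j (n + 1))) →
        E (n₀ + 1) = Real.exp a * E n₀ :=
  mu_system_profile_step_general N hN μ hrec a n₀ hprof
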